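/- arXiv:1004.1763 — 6 statements merged into one kernel-verified Lean document; each statement's English description precedes it below -/
import Mathlib

section
/- Let G be the group ⟨a, b | a^k = b^{ql} = 1, b a b^{-1} = a^n⟩ with q prime, n^q ≡ 1 (mod k), n ≢ 1 (mod k), and c = gcd(n-1, k). For any integer j not divisible by q, gcd(n^j - 1, k) = c. -/
/-! Modulo any divisor `d` of `k` we have `n ^ q ≡ 1`, so `n ^ j ≡ 1` forces `n ≡ 1` because
`gcd q j = 1`; hence `n ^ j - 1` and `n - 1` have the same common divisors with `k`. -/

theorem Int.modEq_one_of_pow_modEq_one_of_coprime {d i j : ℕ} {n : ℤ} (hij : i.Coprime j)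
    (hi : n ^ i ≡ 1 [ZMOD d]) (hj : n ^ j ≡ 1 [ZMOD d]) : n ≡ 1 [ZMOD d] := by
  rw [← ZMod.intCast_eq_intCast_iff] at *
  push_cast at *
  exact (pow_eq_one_iff_of_coprime hij).mp ⟨hi, hj⟩

theorem Int.dvd_pow_sub_one_iff_dvd_sub_one {d i j : ℕ} {n : ℤ} (hij : i.Coprime j)
    (hi : n ^ i ≡ 1 [ZMOD d]) : (d : ℤ) ∣ n ^ j - 1 ↔ (d : ℤ) ∣ n - 1 := by
  simp only [← Int.modEq_iff_dvd, Int.modEq_comm (a := (1 : ℤ))]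
  exact ⟨Int.modEq_one_of_pow_modEq_one_of_coprime hij hi, fun h => by simpa using h.pow j⟩

theorem Int.gcd_eq_gcd_of_dvd_iff {a b c : ℤ}
    (h : ∀ d : ℕ, (d : ℤ) ∣ c → ((d : ℤ) ∣ a ↔ (d : ℤ) ∣ b)) : Int.gcd a c = Int.gcd b c := by
  apply Nat.dvd_antisymm <;> apply Int.natCast_dvd_natCast.mp <;>
    refine Int.dvd_coe_gcd ?_ (Int.gcd_dvd_right _ _)
  · exact (h _ (Int.gcd_dvd_right _ _)).mp (Int.gcd_dvd_left _ _)
  · exact (h _ (Int.gcd_dvd_right _ _)).mpr (Int.gcd_dvd_left _ _)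

theorem stmt_7_general (k q : ℕ) (n : ℤ) (hq : q.Prime)
    (hnq : n ^ q ≡ 1 [ZMOD (k : ℤ)]) :
    ∀ j : ℕ, ¬ q ∣ j → Int.gcd (n ^ j - 1) (k : ℤ) = Int.gcd (n - 1) (k : ℤ) := by
  intro j hj
  have hqj : q.Coprime j := hq.coprime_iff_not_dvd.mpr hj
  refine Int.gcd_eq_gcd_of_dvd_iff fun d hd => ?_
  exact Int.dvd_pow_sub_one_iff_dvd_sub_one hqj (hnq.of_dvd hd)

theorem stmt_7 (k q : ℕ) (n : ℤ) (hk : 0 < k) (hq : q.Prime)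
    (hnq : n ^ q ≡ 1 [ZMOD (k : ℤ)]) (hn1 : ¬ n ≡ 1 [ZMOD (k : ℤ)]) :
    ∀ j : ℕ, ¬ q ∣ j → Int.gcd (n ^ j - 1) (k : ℤ) = Int.gcd (n - 1) (k : ℤ) :=
  stmt_7_general k q n hq hnq
end

section
/- Let G be the group ⟨a, b | a^k = b^{ql} = 1, b a b^{-1} = a^n⟩ with q prime, n^q ≡ 1 (mod k), n ≢ 1 (mod k), and c = gcd(n-1, k). If q does not divide j, then the conjugacy class of a^i b^j in G is {a^{i + hc} b^j : h = 0, 1, ..., k/c - 1} and has exactly k/c elements. -/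
/-!
Every element of `G` is `a ^ u * b ^ v`, and conjugating `a ^ i * b ^ j` by it gives
`a ^ (i + i * (n ^ v - 1) - u * (n ^ j - 1)) * b ^ j`. Modulo `k` the shifts
`i * (n ^ v - 1) - u * (n ^ j - 1)` are multiples of `c`, and the shifts with `v = 0` already
give all multiples of `gcd (n ^ j - 1, k)`. Since `n ^ q ≡ 1` and `q ∤ j`, the order of `n`
modulo `gcd (n ^ j - 1, k)` divides both `j` and `q`, so this gcd equals `c`. The class is thus
`a ^ i ⟨a ^ c⟩ b ^ j`, and `a ^ c` has order `k / c`.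
-/

theorem Int.gcd_pow_sub_one_eq_of_coprime {n k : ℤ} {q j : ℕ} (hnq : n ^ q ≡ 1 [ZMOD k])
    (hjq : j.Coprime q) : Int.gcd (n ^ j - 1) k = Int.gcd (n - 1) k := by
  set d := Int.gcd (n ^ j - 1) k
  have hdk : (d : ℤ) ∣ k := Int.gcd_dvd_right _ _
  have hj : (n : ZMod d) ^ j = 1 := by
    rw [← sub_eq_zero]
    exact_mod_cast (ZMod.intCast_zmod_eq_zero_iff_dvd _ d).mpr (Int.gcd_dvd_left _ _)
  have hq : (n : ZMod d) ^ q = 1 := by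
    rw [← sub_eq_zero]
    exact_mod_cast (ZMod.intCast_zmod_eq_zero_iff_dvd _ d).mpr (hdk.trans hnq.symm.dvd)
  have hn : (d : ℤ) ∣ n - 1 := by
    rw [← ZMod.intCast_zmod_eq_zero_iff_dvd]
    push_cast
    rw [(pow_eq_one_iff_of_coprime hjq).mp ⟨hj, hq⟩, sub_self]
  exact Nat.dvd_antisymm (Int.dvd_gcd hn hdk)
    (Int.dvd_gcd ((Int.gcd_dvd_left _ _).trans (sub_one_dvd_pow_sub_one n j))
      (Int.gcd_dvd_right _ _))

section OrderOf

variable {G : Type*} [Group G] {x : G} {d : ℕ}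

theorem zpow_add_natCast_mul (x : G) (i : ℤ) (d : ℕ) (t : ℤ) :
    x ^ (i + t * d) = x ^ i * (x ^ d) ^ t := by
  rw [zpow_add, mul_comm, zpow_mul, zpow_natCast]

theorem exists_lt_orderOf_div_zpow_add_mul_eq (hx : IsOfFinOrder x) (hd : d ∣ orderOf x)
    (i t : ℤ) : ∃ h : ℕ, h < orderOf x / d ∧ x ^ (i + h * d) = x ^ (i + t * d) := by
  have hd0 : d ≠ 0 := by rintro rfl; exact hx.orderOf_pos.ne' (zero_dvd_iff.mp hd)
  have hy : orderOf (x ^ d) = orderOf x / d := orderOf_pow_of_dvd hd0 hd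
  have hy0 : (0 : ℤ) < orderOf (x ^ d) := by
    rw [hy]; exact_mod_cast Nat.div_pos (Nat.le_of_dvd hx.orderOf_pos hd) (Nat.pos_of_ne_zero hd0)
  refine ⟨(t % orderOf (x ^ d)).toNat, ?_, ?_⟩
  · rw [← hy, ← Int.ofNat_lt, Int.toNat_of_nonneg (Int.emod_nonneg t hy0.ne')]
    exact Int.emod_lt_of_pos t hy0
  · rw [zpow_add_natCast_mul, zpow_add_natCast_mul,
      Int.toNat_of_nonneg (Int.emod_nonneg t hy0.ne'), zpow_mod_orderOf]

theorem injOn_zpow_add_mul (hd0 : d ≠ 0) (hd : d ∣ orderOf x) (i : ℤ) :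
    Set.InjOn (fun h : ℕ => x ^ (i + h * d)) (Set.Iio (orderOf x / d)) := by
  intro h₁ h₁lt h₂ h₂lt heq
  simp only [zpow_add_natCast_mul x i d, zpow_natCast, mul_right_inj] at heq
  rw [← orderOf_pow_of_dvd hd0 hd] at h₁lt h₂lt
  exact pow_injOn_Iio_orderOf h₁lt h₂lt heq

end OrderOf

section Metacyclic

variable {G : Type*} [Group G] {a b : G} {n : ℤ}

theorem pow_mul_zpow_mul_inv_of_conj (hrel : b * a * b⁻¹ = a ^ n) (v : ℕ) (m : ℤ) :
    b ^ v * a ^ m * (b ^ v)⁻¹ = a ^ (m * n ^ v) := by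
  induction v with
  | zero => simp
  | succ v ih =>
    calc b ^ (v + 1) * a ^ m * (b ^ (v + 1))⁻¹
        = b * (b ^ v * a ^ m * (b ^ v)⁻¹) * b⁻¹ := by group
      _ = a ^ (m * n ^ (v + 1)) := by
        rw [ih, ← conj_zpow, hrel, ← zpow_mul, pow_succ]; ring_nf

theorem pow_mul_zpow_eq_of_conj (hrel : b * a * b⁻¹ = a ^ n) (v : ℕ) (m : ℤ) :
    b ^ v * a ^ m = a ^ (m * n ^ v) * b ^ v :=
  mul_inv_eq_iff_eq_mul.mp (pow_mul_zpow_mul_inv_of_conj hrel v m)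

theorem exists_eq_zpow_mul_pow [Finite G] (hrel : b * a * b⁻¹ = a ^ n)
    (hgen : Subgroup.closure ({a, b} : Set G) = ⊤) (g : G) :
    ∃ (u : ℤ) (v : ℕ), g = a ^ u * b ^ v := by
  have hg : g ∈ Submonoid.closure ({a, b} : Set G) := by
    rw [← Subgroup.closure_toSubmonoid_of_finite, hgen]; trivial
  induction hg using Submonoid.closure_induction with
  | mem x hx =>
    rcases hx with rfl | rfl
    · exact ⟨1, 0, by simp⟩
    · exact ⟨0, 1, by simp⟩
  | one => exact ⟨0, 0, by simp⟩
  | mul x y _ _ hx hy =>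
    obtain ⟨u, v, rfl⟩ := hx
    obtain ⟨u', v', rfl⟩ := hy
    refine ⟨u + u' * n ^ v, v + v', ?_⟩
    rw [mul_assoc, ← mul_assoc (b ^ v), pow_mul_zpow_eq_of_conj hrel, zpow_add, pow_add]
    group

theorem conj_pow_zpow_mul_pow (hrel : b * a * b⁻¹ = a ^ n) (v j : ℕ) (m : ℤ) :
    b ^ v * (a ^ m * b ^ j) * (b ^ v)⁻¹ = a ^ (m * n ^ v) * b ^ j := by
  rw [← pow_mul_zpow_mul_inv_of_conj hrel]
  have : b ^ j * (b ^ v)⁻¹ = (b ^ v)⁻¹ * b ^ j := ((Commute.refl b).pow_pow j v).inv_right.eq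
  simp only [mul_assoc, this]

theorem conj_zpow_zpow_mul_pow (hrel : b * a * b⁻¹ = a ^ n) (u m : ℤ) (j : ℕ) :
    a ^ u * (a ^ m * b ^ j) * (a ^ u)⁻¹ = a ^ (u + m - u * n ^ j) * b ^ j := by
  have := pow_mul_zpow_eq_of_conj hrel j (-u)
  rw [← zpow_neg, mul_assoc, mul_assoc, this, sub_eq_add_neg, zpow_add, zpow_add, neg_mul]
  group

theorem isConj_zpow_mul_pow_iff [Finite G] (hrel : b * a * b⁻¹ = a ^ n)
    (hgen : Subgroup.closure ({a, b} : Set G) = ⊤) {i : ℤ} {j : ℕ}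
    (hj : Int.gcd (n ^ j - 1) (orderOf a) = Int.gcd (n - 1) (orderOf a)) {g : G} :
    IsConj (a ^ i * b ^ j) g ↔
      ∃ t : ℤ, g = a ^ (i + t * Int.gcd (n - 1) (orderOf a)) * b ^ j := by
  set c := Int.gcd (n - 1) (orderOf a)
  have hc : ∀ v : ℕ, (c : ℤ) ∣ n ^ v - 1 :=
    fun v ↦ (Int.gcd_dvd_left _ _).trans (sub_one_dvd_pow_sub_one n v)
  rw [isConj_iff]
  constructor
  · rintro ⟨w, rfl⟩
    obtain ⟨u, v, rfl⟩ := exists_eq_zpow_mul_pow hrel hgen w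
    have hconj : a ^ u * b ^ v * (a ^ i * b ^ j) * (a ^ u * b ^ v)⁻¹
        = a ^ u * (b ^ v * (a ^ i * b ^ j) * (b ^ v)⁻¹) * (a ^ u)⁻¹ := by group
    rw [hconj, conj_pow_zpow_mul_pow hrel, conj_zpow_zpow_mul_pow hrel]
    obtain ⟨t, ht⟩ : (c : ℤ) ∣ i * (n ^ v - 1) - u * (n ^ j - 1) :=
      dvd_sub (dvd_mul_of_dvd_right (hc v) i) (dvd_mul_of_dvd_right (hc j) u)
    exact ⟨t, by congr 2; linear_combination ht⟩
  · rintro ⟨t, rfl⟩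
    have hbez := Int.gcd_eq_gcd_ab (n ^ j - 1) (orderOf a)
    rw [hj] at hbez
    refine ⟨a ^ (-(t * (n ^ j - 1).gcdA (orderOf a))), ?_⟩
    rw [conj_zpow_zpow_mul_pow hrel, zpow_eq_zpow_iff_modEq.mpr]
    exact Int.modEq_iff_dvd.mpr
      ⟨t * (n ^ j - 1).gcdB (orderOf a), by linear_combination t * hbez⟩

end Metacyclic

theorem stmt_8_general {G : Type*} [Group G] [Fintype G] (k q : ℕ) (n : ℤ) (a b : G)
    (hq : q.Prime)
    (hnq : n ^ q ≡ 1 [ZMOD (k : ℤ)])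
    (hoa : orderOf a = k)
    (hrel : b * a * b⁻¹ = a ^ n)
    (hgen : Subgroup.closure ({a, b} : Set G) = ⊤)
    (i : ℤ) (j : ℕ) (hj : ¬ q ∣ j) :
    {g : G | IsConj (a ^ i * b ^ j) g}
        = {g : G | ∃ h : ℕ, h < k / Int.gcd (n - 1) (k : ℤ) ∧
            g = a ^ (i + (h : ℤ) * (Int.gcd (n - 1) (k : ℤ) : ℤ)) * b ^ j} ∧
    {g : G | IsConj (a ^ i * b ^ j) g}.ncard = k / Int.gcd (n - 1) (k : ℤ) := by
  subst hoa
  set c := Int.gcd (n - 1) (orderOf a)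
  have hc0 : c ≠ 0 := (Int.gcd_pos_iff.mpr (Or.inr (by exact_mod_cast (orderOf_pos a).ne'))).ne'
  have hc : c ∣ orderOf a := Int.natCast_dvd_natCast.mp (Int.gcd_dvd_right _ _)
  have hjq : Int.gcd (n ^ j - 1) (orderOf a) = c :=
    Int.gcd_pow_sub_one_eq_of_coprime hnq (hq.coprime_iff_not_dvd.mpr hj).symm
  have hclass : {g : G | IsConj (a ^ i * b ^ j) g}
      = (fun h : ℕ ↦ a ^ (i + h * c) * b ^ j) '' Set.Iio (orderOf a / c) := by
    ext g
    simp only [Set.mem_ofPred_eq, isConj_zpow_mul_pow_iff hrel hgen hjq, Set.mem_image, Set.mem_Iio]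
    constructor
    · rintro ⟨t, rfl⟩
      obtain ⟨h, hlt, heq⟩ :=
        exists_lt_orderOf_div_zpow_add_mul_eq (isOfFinOrder_of_finite a) hc i t
      exact ⟨h, hlt, by rw [heq]⟩
    · rintro ⟨h, -, rfl⟩
      exact ⟨h, rfl⟩
  refine ⟨by rw [hclass]; ext g; simp [eq_comm], ?_⟩
  have hinj : Set.InjOn (fun h : ℕ ↦ a ^ (i + h * c) * b ^ j) (Set.Iio (orderOf a / c)) :=
    fun _ h₁lt _ h₂lt heq ↦ injOn_zpow_add_mul hc0 hc i h₁lt h₂lt (mul_right_cancel heq)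
  rw [hclass, hinj.ncard_image, Set.ncard_Iio_nat]

theorem stmt_8 {G : Type*} [Group G] [Fintype G] (k q l : ℕ) (n : ℤ) (a b : G)
    (hk : 0 < k) (hl : 0 < l) (hq : q.Prime)
    (hnq : n ^ q ≡ 1 [ZMOD (k : ℤ)]) (hn1 : ¬ n ≡ 1 [ZMOD (k : ℤ)])
    (hoa : orderOf a = k) (hob : orderOf b = q * l)
    (hrel : b * a * b⁻¹ = a ^ n)
    (hgen : Subgroup.closure ({a, b} : Set G) = ⊤)
    (hcard : Fintype.card G = k * q * l)
    (i : ℤ) (j : ℕ) (hj : ¬ q ∣ j) :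
    {g : G | IsConj (a ^ i * b ^ j) g}
        = {g : G | ∃ h : ℕ, h < k / Int.gcd (n - 1) (k : ℤ) ∧
            g = a ^ (i + (h : ℤ) * (Int.gcd (n - 1) (k : ℤ) : ℤ)) * b ^ j} ∧
    {g : G | IsConj (a ^ i * b ^ j) g}.ncard = k / Int.gcd (n - 1) (k : ℤ) :=
  stmt_8_general k q n a b hq hnq hoa hrel hgen i j hj
end

section
/- Let G be the group ⟨a, b | a^k = b^{ql} = 1, b a b^{-1} = a^n⟩ with q prime, n^q ≡ 1 (mod k), n ≢ 1 (mod k), and c = gcd(n-1, k). If q divides j and a^i is not central in G, then the conjugacy class of a^i b^j is {a^{i n^u} b^j : u = 0, 1, ..., q-1} and has exactly q elements. -/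
/-!
Write `x = a^i b^j`. Since `b a b⁻¹ = a^n` and `n^q ≡ 1 (mod ord a)`, `b^q` commutes with `a`, and
so does `b^j`; hence conjugation by `a` fixes every `a^{i'} b^j`, while conjugation by `b` maps
`a^{i n^u} b^j` to `a^{i n^{u+1}} b^j`. The orbit of `x` under conjugation by `b` is therefore
invariant under conjugation by both generators, so it is the whole conjugacy class. It has a
period dividing the prime `q`; period `1` would make `a^i` commute with `b`, hence central.
-/

open Function Set Subgroup

section

variable {G : Type*} [Group G]

theorem iterate_mulAut_conj_apply (b x : G) (u : ℕ) :
    (MulAut.conj b)^[u] x = b ^ u * x * (b ^ u)⁻¹ := by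
  induction u with
  | zero => simp
  | succ u ih => rw [iterate_succ_apply', ih, MulAut.conj_apply]; group

theorem pow_mul_zpow_mul_inv_pow {a b : G} {n : ℤ} (hrel : b * a * b⁻¹ = a ^ n) (s : ℕ) (m : ℤ) :
    b ^ s * a ^ m * (b ^ s)⁻¹ = a ^ (m * n ^ s) := by
  have h : ∀ s : ℕ, b ^ s * a * (b ^ s)⁻¹ = a ^ n ^ s := by
    intro s
    induction s with
    | zero => simp
    | succ s ih =>
      rw [pow_succ', mul_inv_rev, show b * b ^ s * a * ((b ^ s)⁻¹ * b⁻¹)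
        = b * (b ^ s * a * (b ^ s)⁻¹) * b⁻¹ by group, ih, ← conj_zpow, hrel, ← zpow_mul, pow_succ']
  rw [← conj_zpow, h, ← zpow_mul, mul_comm]

theorem commute_pow_of_zpow_pow_eq_self {a b : G} {n : ℤ} {q : ℕ} (hrel : b * a * b⁻¹ = a ^ n)
    (ha : a ^ n ^ q = a) : Commute a (b ^ q) := by
  have h := pow_mul_zpow_mul_inv_pow hrel q 1
  rw [one_mul, zpow_one, ha, mul_inv_eq_iff_eq_mul] at h
  exact h.symm

theorem iterate_mulAut_conj_zpow_mul {a b y : G} {n : ℤ} (hrel : b * a * b⁻¹ = a ^ n)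
    (hy : Commute b y) (i : ℤ) (u : ℕ) :
    (MulAut.conj b)^[u] (a ^ i * y) = a ^ (i * n ^ u) * y := by
  rw [iterate_mulAut_conj_apply, ← pow_mul_zpow_mul_inv_pow hrel u i]
  simp only [mul_assoc, (hy.pow_left u).inv_left.eq]

theorem mapsTo_mulAut_conj_of_mem_closure {s O : Set G}
    (hs : ∀ g ∈ s, MapsTo (MulAut.conj g) O O ∧ MapsTo (MulAut.conj g⁻¹) O O)
    {c : G} (hc : c ∈ closure s) : MapsTo (MulAut.conj c) O O := by
  induction hc using closure_induction'' with
  | mem g hg => exact (hs g hg).1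
  | inv_mem g hg => exact (hs g hg).2
  | one => simpa using mapsTo_id O
  | mul g h _ _ hg hh => simpa [MulAut.coe_mul] using hg.comp hh

theorem mapsTo_mulAut_conj_inv_range_iterate {b x : G} {q : ℕ} (hq : 0 < q)
    (hx : IsPeriodicPt (MulAut.conj b) q x) :
    MapsTo (MulAut.conj b⁻¹) (range fun u => (MulAut.conj b)^[u] x)
      (range fun u => (MulAut.conj b)^[u] x) := by
  rintro _ ⟨u, rfl⟩
  refine ⟨u + (q - 1), ?_⟩
  have h : MulAut.conj b ((MulAut.conj b)^[u + (q - 1)] x) = (MulAut.conj b)^[u] x := by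
    rw [← iterate_succ_apply' (MulAut.conj b), show (u + (q - 1)).succ = u + q by omega,
      iterate_add_apply, hx.eq]
  dsimp only
  rw [← h, MulAut.conj_apply, MulAut.conj_apply]
  group

theorem conjugatesOf_eq_image_iterate_mulAut_conj {a b x : G} {q : ℕ}
    (hgen : closure {a, b} = ⊤) (hq : 0 < q) (hper : IsPeriodicPt (MulAut.conj b) q x)
    (ha : ∀ u, Commute a ((MulAut.conj b)^[u] x)) :
    conjugatesOf x = (fun u => (MulAut.conj b)^[u] x) '' Iio q := by
  set O := range fun u => (MulAut.conj b)^[u] x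
  have mapsTo_of_commute : ∀ {c}, (∀ y ∈ O, Commute c y) → MapsTo (MulAut.conj c) O O := by
    intro c hc y hy
    rwa [MulAut.conj_apply, (hc y hy).eq, mul_inv_cancel_right]
  have hgens : ∀ g ∈ ({a, b} : Set G),
      MapsTo (MulAut.conj g) O O ∧ MapsTo (MulAut.conj g⁻¹) O O := by
    rintro g (rfl | rfl)
    · have hO : ∀ y ∈ O, Commute g y := by rintro _ ⟨u, rfl⟩; exact ha u
      exact ⟨mapsTo_of_commute hO, mapsTo_of_commute fun y hy => (hO y hy).inv_left⟩
    · refine ⟨?_, mapsTo_mulAut_conj_inv_range_iterate hq hper⟩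
      rintro _ ⟨u, rfl⟩
      exact ⟨u + 1, iterate_succ_apply' _ u x⟩
  ext y
  constructor
  · intro hy
    obtain ⟨c, rfl⟩ := isConj_iff.1 hy
    obtain ⟨u, hu⟩ := mapsTo_mulAut_conj_of_mem_closure hgens (hgen ▸ mem_top c) ⟨0, rfl⟩
    exact ⟨u % q, Nat.mod_lt u hq, (hper.iterate_mod_apply u).trans hu⟩
  · rintro ⟨u, -, rfl⟩
    exact isConj_iff.2 ⟨b ^ u, (iterate_mulAut_conj_apply b x u).symm⟩

theorem not_isFixedPt_mulAut_conj_zpow_mul_pow {a b : G} (hgen : closure {a, b} = ⊤) {i : ℤ}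
    (hcentral : a ^ i ∉ Subgroup.center G) (j : ℕ) : ¬IsFixedPt (MulAut.conj b) (a ^ i * b ^ j) := by
  intro hfix
  have hx : Commute b (a ^ i * b ^ j) := mul_inv_eq_iff_eq_mul.1 hfix
  have hb : Commute b (a ^ i) := by
    simpa using hx.mul_right ((Commute.refl b).pow_right j).inv_right
  apply hcentral
  rw [center_eq_iInf hgen]
  simp only [mem_iInf, mem_insert_iff, mem_singleton_iff, forall_eq_or_imp, forall_eq,
    mem_centralizer_singleton_iff]
  exact ⟨((Commute.refl a).zpow_right i).eq.symm, hb.eq.symm⟩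

end

theorem ncard_image_iterate_Iio_minimalPeriod {α : Type*} (f : α → α) (x : α) :
    ((fun u => f^[u] x) '' Iio (minimalPeriod f x)).ncard = minimalPeriod f x := by
  rw [iterate_injOn_Iio_minimalPeriod.ncard_image, ncard_Iio_nat]

theorem stmt_9_general {G : Type*} [Group G] (k q : ℕ) (n : ℤ) (a b : G) (hq : q.Prime)
    (hnq : n ^ q ≡ 1 [ZMOD (k : ℤ)]) (hoa : orderOf a = k) (hrel : b * a * b⁻¹ = a ^ n)
    (hgen : Subgroup.closure ({a, b} : Set G) = ⊤)
    (i : ℤ) (j : ℕ) (hj : q ∣ j) (hcentral : a ^ i ∉ Subgroup.center G) :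
    {g : G | IsConj (a ^ i * b ^ j) g}
        = {g : G | ∃ u : ℕ, u < q ∧ g = a ^ (i * n ^ u) * b ^ j} ∧
    {g : G | IsConj (a ^ i * b ^ j) g}.ncard = q := by
  have : Fact q.Prime := ⟨hq⟩
  have ha : a ^ n ^ q = a := by
    rw [← zpow_one a, ← zpow_mul, one_mul, zpow_eq_zpow_iff_modEq, hoa]
    exact hnq
  have hbj : Commute a (b ^ j) := by
    obtain ⟨t, rfl⟩ := hj
    rw [pow_mul]
    exact (commute_pow_of_zpow_pow_eq_self hrel ha).pow_right t
  have hiter := iterate_mulAut_conj_zpow_mul hrel ((Commute.refl b).pow_right j) i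
  have hper : IsPeriodicPt (MulAut.conj b) q (a ^ i * b ^ j) := by
    rw [IsPeriodicPt, IsFixedPt, hiter, mul_comm i, zpow_mul, ha]
  have hmin : minimalPeriod (MulAut.conj b) (a ^ i * b ^ j) = q :=
    minimalPeriod_eq_prime hper (not_isFixedPt_mulAut_conj_zpow_mul_pow hgen hcentral j)
  have hclass : {g : G | IsConj (a ^ i * b ^ j) g}
      = (fun u => (MulAut.conj b)^[u] (a ^ i * b ^ j)) '' Iio q :=
    conjugatesOf_eq_image_iterate_mulAut_conj hgen hq.pos hper
      fun u => by rw [hiter]; exact ((Commute.refl a).zpow_right _).mul_right hbj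
  refine ⟨?_, by rw [hclass, ← hmin, ncard_image_iterate_Iio_minimalPeriod]⟩
  rw [hclass]
  ext g
  simp [hiter, eq_comm]

theorem stmt_9 {G : Type*} [Group G] [Fintype G] (k q l : ℕ) (n : ℤ) (a b : G)
    (hk : 0 < k) (hl : 0 < l) (hq : q.Prime)
    (hnq : n ^ q ≡ 1 [ZMOD (k : ℤ)]) (hn1 : ¬ n ≡ 1 [ZMOD (k : ℤ)])
    (hoa : orderOf a = k) (hob : orderOf b = q * l)
    (hrel : b * a * b⁻¹ = a ^ n)
    (hgen : Subgroup.closure ({a, b} : Set G) = ⊤)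
    (hcard : Fintype.card G = k * q * l)
    (i : ℤ) (j : ℕ) (hj : q ∣ j) (hcentral : a ^ i ∉ Subgroup.center G) :
    {g : G | IsConj (a ^ i * b ^ j) g}
        = {g : G | ∃ u : ℕ, u < q ∧ g = a ^ (i * n ^ u) * b ^ j} ∧
    {g : G | IsConj (a ^ i * b ^ j) g}.ncard = q :=
  stmt_9_general k q n a b hq hnq hoa hrel hgen i j hj hcentral
end

section
/- Let k ≥ 1, q a prime, n an integer with n^q ≡ 1 (mod k) and n ≢ 1 (mod k), and c = gcd(n-1, k). Then k ≡ c (mod q); in particular q divides k if and only if q divides c. -/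
/-!
Multiplication by `n` is an action on `ZMod k` whose `q`-th power is the identity, so every orbit
has size `1` or `q` and `k ≡ #fixed points [MOD q]`. The fixed points are the solutions of
`(n - 1) x = 0`, and there are exactly `gcd (n - 1, k)` of them.
-/

open MulAction

theorem MulAction.card_modEq_card_fixedBy {M α : Type*} [Monoid M] [MulAction M α] [Finite α]
    {p n : ℕ} [Fact p.Prime] {m : M} (hm : m ^ p ^ n = 1) :
    Nat.card α ≡ Nat.card (fixedBy α m) [MOD p] := by
  classical
  have := Fintype.ofFinite α
  have hf : toEndHom (α := α) m ^ p ^ n = 1 := by rw [← map_pow, hm, map_one]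
  rw [Nat.card_eq_fintype_card, Nat.card_eq_fintype_card]
  convert Equiv.Perm.card_fixedPoints_modEq hf using 3
  rfl

theorem ZMod.natCard_setOf_natCast_mul_eq_zero (k m : ℕ) [NeZero k] :
    Nat.card {x : ZMod k | (m : ZMod k) * x = 0} = Nat.gcd m k := by
  let f : ZMod k →+ ZMod k := AddMonoidHom.mulLeft (m : ZMod k)
  have hrange : f.range = AddSubgroup.zmultiples (m : ZMod k) := by
    ext y
    refine ⟨?_, ?_⟩
    · rintro ⟨x, rfl⟩
      exact ⟨x.val, by simp [f, mul_comm]⟩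
    · rintro ⟨z, rfl⟩
      exact ⟨z, by simp [f, mul_comm]⟩
  have hindex : f.ker.index = k / Nat.gcd k m := by
    rw [AddSubgroup.index_ker, hrange, Nat.card_zmultiples, ZMod.addOrderOf_coe m (NeZero.ne k)]
  have hcard := f.ker.card_mul_index
  rw [hindex, Nat.card_zmod] at hcard
  have hquot_pos : 0 < k / Nat.gcd k m :=
    Nat.div_pos (Nat.gcd_le_left m (NeZero.pos k)) (Nat.gcd_pos_of_pos_left m (NeZero.pos k))
  rw [Nat.gcd_comm]
  exact Nat.eq_of_mul_eq_mul_right hquot_pos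
    (hcard.trans (Nat.mul_div_cancel' (Nat.gcd_dvd_left k m)).symm)

theorem ZMod.natCard_setOf_intCast_mul_eq_zero (k : ℕ) [NeZero k] (a : ℤ) :
    Nat.card {x : ZMod k | (a : ZMod k) * x = 0} = Int.gcd a k := by
  rw [Int.gcd, Int.natAbs_natCast, ← ZMod.natCard_setOf_natCast_mul_eq_zero]
  congr! 4 with x
  rcases Int.natAbs_eq a with h | h <;> rw [h] <;> simp

theorem ZMod.natCard_fixedBy_intCast (k : ℕ) [NeZero k] (n : ℤ) :
    Nat.card (fixedBy (ZMod k) (n : ZMod k)) = Int.gcd (n - 1) k := by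
  have hfix : fixedBy (ZMod k) (n : ZMod k) = {x | ((n - 1 : ℤ) : ZMod k) * x = 0} := by
    ext x
    simp [mem_fixedBy, sub_mul, sub_eq_zero]
  rw [hfix, ZMod.natCard_setOf_intCast_mul_eq_zero]

theorem stmt_10_general (k q : ℕ) (n : ℤ) (hk : 0 < k) (hq : q.Prime)
    (hnq : n ^ q ≡ 1 [ZMOD (k : ℤ)]) :
    (k : ℤ) ≡ (Int.gcd (n - 1) (k : ℤ) : ℤ) [ZMOD (q : ℤ)] ∧
    (q ∣ k ↔ q ∣ Int.gcd (n - 1) (k : ℤ)) := by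
  have : NeZero k := ⟨hk.ne'⟩
  have : Fact q.Prime := ⟨hq⟩
  have hpow : (n : ZMod k) ^ q ^ 1 = 1 := by
    simpa using (ZMod.intCast_eq_intCast_iff _ _ _).mpr hnq
  have hmod := card_modEq_card_fixedBy (α := ZMod k) hpow
  rw [Nat.card_zmod, ZMod.natCard_fixedBy_intCast] at hmod
  exact ⟨Int.natCast_modEq_iff.mpr hmod, hmod.dvd_iff dvd_rfl⟩

theorem stmt_10 (k q : ℕ) (n : ℤ) (hk : 0 < k) (hq : q.Prime)
    (hnq : n ^ q ≡ 1 [ZMOD (k : ℤ)]) (hn1 : ¬ n ≡ 1 [ZMOD (k : ℤ)]) :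
    (k : ℤ) ≡ (Int.gcd (n - 1) (k : ℤ) : ℤ) [ZMOD (q : ℤ)] ∧
    (q ∣ k ↔ q ∣ Int.gcd (n - 1) (k : ℤ)) :=
  stmt_10_general k q n hk hq hnq
end

section
/- Let k ≥ 1, q a prime, n an integer with n^q ≡ 1 (mod k) and n ≢ 1 (mod k), and d = 1 + n + ... + n^{q-1}. For any positive integers m, r: if q | m and k | mr, then kq | mdr. -/
theorem stmt_12 (k q : ℕ) (n : ℤ) (hk : 0 < k) (hq : q.Prime)
    (hnq : n ^ q ≡ 1 [ZMOD (k : ℤ)]) (hn1 : ¬ n ≡ 1 [ZMOD (k : ℤ)])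
    (m r : ℕ) (hm : 0 < m) (hr : 0 < r) (hqm : q ∣ m) (hkmr : k ∣ m * r) :
    ((k : ℤ) * q) ∣ (m : ℤ) * (∑ j ∈ Finset.range q, n ^ j) * r := by
  obtain ⟨s, hs⟩ := hkmr
  set d : ℤ := ∑ j ∈ Finset.range q, n ^ j with hd
  have hmdr : (m : ℤ) * d * (r : ℤ) = (k : ℤ) * (s : ℤ) * d := by
    have := congrArg (Nat.cast : ℕ → ℤ) hs
    push_cast at this
    linear_combination d * this
  have hqks : q ∣ k * s := by rw [← hs]; exact hqm.mul_right r
  rcases (Nat.Prime.dvd_mul hq).mp hqks with hqk | hqs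
  · -- q ∣ k, show q ∣ d
    haveI : Fact q.Prime := ⟨hq⟩
    have hqd : (q : ℤ) ∣ d := by
      have h2 : n ^ q ≡ 1 [ZMOD (q : ℤ)] :=
        Int.ModEq.of_dvd (Int.natCast_dvd_natCast.mpr hqk) hnq
      have h3 : ((n : ZMod q)) ^ q = 1 := by
        have := (ZMod.intCast_eq_intCast_iff _ _ _).mpr h2
        push_cast at this
        exact this
      have h4 : (n : ZMod q) = 1 := by rw [← ZMod.pow_card (n : ZMod q), h3]
      have h5 : ((d : ZMod q)) = 0 := by
        rw [hd]
        push_cast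
        simp [h4, CharP.cast_eq_zero]
      exact (ZMod.intCast_zmod_eq_zero_iff_dvd d q).mp h5
    obtain ⟨e, he⟩ := hqd
    exact ⟨(s : ℤ) * e, by rw [hmdr, he]; ring⟩
  · obtain ⟨e, he⟩ := hqs
    exact ⟨(e : ℤ) * d, by rw [hmdr, he]; push_cast; ring⟩
end

section
/- Let q > 2 be a prime, k ≥ 1, and n an integer with n^q ≡ 1 (mod k) and n ≢ 1 (mod k). Set d = 1 + n + ... + n^{q-1}. If q divides d, then kq divides d(d - q). -/
theorem stmt_14 (k q : ℕ) (n : ℤ) (hk : 0 < k) (hq : q.Prime) (hq2 : 2 < q)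
    (hnq : n ^ q ≡ 1 [ZMOD (k : ℤ)]) (hn1 : ¬ n ≡ 1 [ZMOD (k : ℤ)])
    (hqd : (q : ℤ) ∣ (∑ j ∈ Finset.range q, n ^ j)) :
    ((k : ℤ) * q) ∣ (∑ j ∈ Finset.range q, n ^ j) * ((∑ j ∈ Finset.range q, n ^ j) - q) := by
  set d : ℤ := ∑ j ∈ Finset.range q, n ^ j with hd
  set e : ℤ := ∑ j ∈ Finset.range q, ∑ i ∈ Finset.range j, n ^ i with he
  have hgeom : d * (n - 1) = n ^ q - 1 := geom_sum_mul n q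
  have hsub : d - q = (n - 1) * e := by
    have : d - q = ∑ j ∈ Finset.range q, (n ^ j - 1) := by
      rw [Finset.sum_sub_distrib]
      simp [hd]
    rw [this, he, Finset.mul_sum]
    refine Finset.sum_congr rfl fun j _ => ?_
    have := geom_sum_mul n j
    linarith [geom_sum_mul n j]
  have hkdvd : (k : ℤ) ∣ n ^ q - 1 := Int.ModEq.dvd hnq.symm
  have hfact : d * (d - q) = (n ^ q - 1) * e := by
    rw [hsub, ← hgeom]; ring
  by_cases hqk : q ∣ k
  · -- n ≡ 1 mod q, so q ∣ e
    haveI : Fact q.Prime := ⟨hq⟩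
    have hq0 : (q : ℤ) ∣ n ^ q - 1 := dvd_trans (Int.natCast_dvd_natCast.mpr hqk) hkdvd
    have hn1q : (n : ZMod q) = 1 := by
      have h1 : ((n ^ q : ℤ) : ZMod q) = 1 := by
        have := (ZMod.intCast_zmod_eq_zero_iff_dvd (n ^ q - 1) q).mpr hq0
        push_cast at this ⊢
        linear_combination this
      have h2 : (n : ZMod q) ^ q = 1 := by push_cast at h1; exact h1
      calc (n : ZMod q) = (n : ZMod q) ^ q := (ZMod.pow_card _).symm
        _ = 1 := h2
    have hqe : (q : ℤ) ∣ e := by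
      rw [← ZMod.intCast_zmod_eq_zero_iff_dvd, he]
      push_cast
      have : ∀ j ∈ Finset.range q, (∑ i ∈ Finset.range j, (n : ZMod q) ^ i)
          = (j : ZMod q) := by
        intro j _
        rw [hn1q]
        simp
      rw [Finset.sum_congr rfl this]
      have hnat : (q : ℕ) ∣ ∑ j ∈ Finset.range q, j := by
        have h2 : (∑ j ∈ Finset.range q, j) * 2 = q * (q - 1) :=
          Finset.sum_range_id_mul_two q
        have hcop : Nat.Coprime q 2 := (Nat.coprime_primes hq Nat.prime_two).mpr
          (by omega)
        have : q ∣ (∑ j ∈ Finset.range q, j) * 2 := h2 ▸ Dvd.intro _ rfl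
        exact (Nat.Coprime.dvd_of_dvd_mul_right hcop this)
      rw [← Nat.cast_sum]
      exact (ZMod.natCast_eq_zero_iff _ _).mpr hnat
    rw [hfact]
    exact mul_dvd_mul hkdvd hqe
  · have hcop : IsCoprime (k : ℤ) (q : ℤ) :=
      Nat.isCoprime_iff_coprime.mpr ((hq.coprime_iff_not_dvd.mpr hqk).symm)
    have hk' : (k : ℤ) ∣ d * (d - q) := hfact ▸ Dvd.dvd.mul_right hkdvd e
    have hq' : (q : ℤ) ∣ d * (d - q) := Dvd.dvd.mul_right hqd _
    exact hcop.mul_dvd hk' hq'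
end
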